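/- Let X be a countable set and let P, H_1, …, H_n (with n ≥ 2) be probability distributions on X. Suppose the max semi-distances W(H_1), …, W(H_n) are all positive and sorted so that W(H_1) ≤ W(H_2) ≤ ⋯ ≤ W(H_n). Let (q_1,…,q_n) be the probability vector produced by the rounding procedure applied to W(H_1),…,W(H_n). Then Σ_{i=1}^n q_i · d_TV(P, H_i) ≤ (3 − 2/n) · min_{j∈[n]} d_TV(P, H_j). (Exact-semi-distance core of Theorem 1.2: a randomized output over the hypotheses achieving expected approximation factor 3 − 2/n.) -/

import Mathlib

/-!
Write `d j` for `d_TV(P, H j)`. A semi-distance is a difference of masses of one set, so it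
is at most a total variation distance, whence `W(H j) ≤ d j`; and `d_TV(H i, H j)` is the mass
difference on the Scheffé set `S i j`, so the triangle inequality through `H i` gives
`d j ≤ d i + W(H i) + W(H j)`. Fix `j₀` minimising `d`. Since `Σ q i = 1` and
`q i · W(H i) = (D' − (k−2) W(H i)) / (D'C' − k(k−2))`, the expected distance is at most
`d j₀ + W(H j₀) (1 + 2(k−2)/(D'C' − k(k−2)))`: if `j₀` is among the first `k` hypotheses
the term `i = j₀` saves `2 q j₀ W(H j₀)`, and otherwise maximality of `k` forces
`D' ≤ (k−2) W(H j₀)`. Cauchy–Schwarz gives `D'C' ≥ k²`, so the factor multiplying `W(H j₀)`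
is at most `2 − 2/k ≤ 2 − 2/n`, and `W(H j₀) ≤ d j₀` finishes.
-/

/-- An index `k` (number of hypotheses considered, indices `0, …, k−1`) is *good*
for the weights `W` if `(k−3)·W j ≤ Σ_{i < k, i ≠ j} W i` for every `j < k`. -/
def IsGoodIndex (W : ℕ → ℝ) (k : ℕ) : Prop :=
  ∀ j ∈ Finset.range k, ((k : ℝ) - 3) * W j ≤ ∑ i ∈ (Finset.range k).erase j, W i

open Finset

section TotalVariation

variable {X : Type*}

noncomputable def tvDist (P Q : X → ℝ) : ℝ := (1 / 2) * ∑' x, |P x - Q x|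

lemma tvDist_triangle {P Q R : X → ℝ} (hP : Summable P) (hQ : Summable Q) (hR : Summable R) :
    tvDist P R ≤ tvDist P Q + tvDist Q R := by
  have hPQ := (hP.sub hQ).abs
  have hQR := (hQ.sub hR).abs
  rw [tvDist, tvDist, tvDist, ← mul_add, ← hPQ.tsum_add hQR]
  refine mul_le_mul_of_nonneg_left ?_ (by norm_num)
  exact Summable.tsum_le_tsum (fun x => abs_sub_le _ _ _) (hP.sub hR).abs (hPQ.add hQR)

lemma two_mul_abs_tsum_subtype_le {f : X → ℝ} (hf : Summable f) (h0 : ∑' x, f x = 0)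
    (s : Set X) : 2 * |∑' x : s, f x| ≤ ∑' x, |f x| := by
  have hfs : ∀ t : Set X, |∑' x : t, f x| ≤ ∑' x : t, |f x| := fun t =>
    norm_tsum_le_tsum_norm (f := fun x : t => f x) (hf.abs.subtype t)
  have hcompl : ∑' x : ↑sᶜ, f x = -∑' x : s, f x := by
    linarith [hf.tsum_subtype_add_tsum_subtype_compl s]
  have := hfs sᶜ
  rw [hcompl, abs_neg] at this
  linarith [hfs s, hf.abs.tsum_subtype_add_tsum_subtype_compl s]

lemma two_mul_tsum_subtype_eq {f : X → ℝ} (hf : Summable f) (h0 : ∑' x, f x = 0) {s : Set X}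
    (hpos : ∀ x ∈ s, 0 ≤ f x) (hneg : ∀ x ∉ s, f x ≤ 0) :
    2 * ∑' x : s, f x = ∑' x, |f x| := by
  have hs : ∑' x : s, |f x| = ∑' x : s, f x := tsum_congr fun x => abs_of_nonneg (hpos x x.2)
  have hsc : ∑' x : ↑sᶜ, |f x| = -∑' x : ↑sᶜ, f x := by
    rw [← tsum_neg]
    exact tsum_congr fun x => abs_of_nonpos (hneg x x.2)
  linarith [hf.tsum_subtype_add_tsum_subtype_compl s,
    hf.abs.tsum_subtype_add_tsum_subtype_compl s]

variable {P Q R : X → ℝ}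

lemma tsum_subtype_compl_sub_eq (hP : Summable P) (hQ : Summable Q)
    (hPQ : ∑' x, P x = ∑' x, Q x) (s : Set X) :
    ∑' x : ↑sᶜ, Q x - ∑' x : ↑sᶜ, P x = ∑' x : s, P x - ∑' x : s, Q x := by
  linarith [hP.tsum_subtype_add_tsum_subtype_compl s, hQ.tsum_subtype_add_tsum_subtype_compl s]

lemma abs_tsum_subtype_sub_le_tvDist (hP : Summable P) (hQ : Summable Q)
    (hPQ : ∑' x, P x = ∑' x, Q x) (s : Set X) :
    |∑' x : s, Q x - ∑' x : s, P x| ≤ tvDist P Q := by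
  have h0 : ∑' x, (Q x - P x) = 0 := by rw [hQ.tsum_sub hP, hPQ, sub_self]
  have := two_mul_abs_tsum_subtype_le (hQ.sub hP) h0 s
  have hsub : ∑' x : s, (Q x - P x) = ∑' x : s, Q x - ∑' x : s, P x :=
    (hQ.subtype s).tsum_sub (hP.subtype s)
  rw [hsub] at this
  simp only [tvDist, abs_sub_comm (P _)]
  linarith

lemma tvDist_eq_tsum_subtype_sub (hQ : Summable Q) (hR : Summable R)
    (hQR : ∑' x, Q x = ∑' x, R x) {s : Set X}
    (hlt : {x | Q x < R x} ⊆ s) (hle : s ⊆ {x | Q x ≤ R x}) :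
    tvDist Q R = ∑' x : s, R x - ∑' x : s, Q x := by
  have h0 : ∑' x, (R x - Q x) = 0 := by rw [hR.tsum_sub hQ, hQR, sub_self]
  have := two_mul_tsum_subtype_eq (hR.sub hQ) h0 (s := s)
    (fun x hx => sub_nonneg.2 (hle hx)) (fun x hx => sub_nonpos.2 (not_lt.1 fun h => hx (hlt h)))
  have hsub : ∑' x : s, (R x - Q x) = ∑' x : s, R x - ∑' x : s, Q x :=
    (hR.subtype s).tsum_sub (hQ.subtype s)
  rw [hsub] at this
  simp only [tvDist, abs_sub_comm (Q _)]
  linarith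

lemma tvDist_le_add_abs_add_abs (hP : Summable P) (hQ : Summable Q) (hR : Summable R)
    (hPQ : ∑' x, P x = ∑' x, Q x) (hQR : ∑' x, Q x = ∑' x, R x) {s : Set X}
    (hlt : {x | Q x < R x} ⊆ s) (hle : s ⊆ {x | Q x ≤ R x}) :
    tvDist P R ≤ tvDist P Q + |∑' x : s, R x - ∑' x : s, P x|
      + |∑' x : ↑sᶜ, Q x - ∑' x : ↑sᶜ, P x| := by
  have hsplit : tvDist Q R = (∑' x : s, R x - ∑' x : s, P x)
      + (∑' x : ↑sᶜ, Q x - ∑' x : ↑sᶜ, P x) := by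
    rw [tvDist_eq_tsum_subtype_sub hQ hR hQR hlt hle, tsum_subtype_compl_sub_eq hP hQ hPQ]
    ring
  linarith [tvDist_triangle hP hQ hR, le_abs_self (∑' x : s, R x - ∑' x : s, P x),
    le_abs_self (∑' x : ↑sᶜ, Q x - ∑' x : ↑sᶜ, P x)]

section ScheffeSet

variable {f : ℕ → X → ℝ} {S : ℕ → ℕ → Set X}

lemma setOf_lt_subset_scheffeSet
    (hS : ∀ i j, S i j = if i < j then {x | f i x < f j x} else {x | f i x ≤ f j x})
    (i j : ℕ) :
    {x | f i x < f j x} ⊆ S i j := by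
  rw [hS]
  split_ifs
  exacts [subset_rfl, Set.ofPred_subset_ofPred.2 fun _ => le_of_lt]

lemma scheffeSet_subset_setOf_le
    (hS : ∀ i j, S i j = if i < j then {x | f i x < f j x} else {x | f i x ≤ f j x})
    (i j : ℕ) :
    S i j ⊆ {x | f i x ≤ f j x} := by
  rw [hS]
  split_ifs
  exacts [Set.ofPred_subset_ofPred.2 fun _ => le_of_lt, subset_rfl]

lemma scheffeSet_swap
    (hS : ∀ i j, S i j = if i < j then {x | f i x < f j x} else {x | f i x ≤ f j x}) {i j : ℕ}
    (hij : i ≠ j) : S j i = (S i j)ᶜ := by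
  ext x
  rw [hS, hS]
  rcases hij.lt_or_gt with h | h <;> simp [h, h.not_gt]

end ScheffeSet

end TotalVariation

section Rounding

variable (W : ℕ → ℝ) (k : ℕ)

noncomputable def roundingDenom : ℝ :=
  (∑ j ∈ range k, W j) * (∑ j ∈ range k, (W j)⁻¹) - (k : ℝ) * ((k : ℝ) - 2)

noncomputable def roundingProb (i : ℕ) : ℝ :=
  if i < k then ((∑ j ∈ range k, W j) / W i - ((k : ℝ) - 2)) / roundingDenom W k else 0

variable {W k}

lemma IsGoodIndex.sub_two_mul_le_sum {j : ℕ} (hgood : IsGoodIndex W k) (hj : j < k) : ((k : ℝ) - 2) * W j ≤ ∑ i ∈ range k, W i := by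
  have := hgood j (mem_range.2 hj)
  rw [← sum_erase_add _ _ (mem_range.2 hj)]
  linarith

lemma isGoodIndex_of_le_three (hW : ∀ i < k, 0 ≤ W i) (hk : k ≤ 3) : IsGoodIndex W k := by
  intro j hj
  have hk' : (k : ℝ) ≤ 3 := by exact_mod_cast hk
  have : ((k : ℝ) - 3) * W j ≤ 0 :=
    mul_nonpos_of_nonpos_of_nonneg (by linarith) (hW j (mem_range.1 hj))
  exact this.trans (sum_nonneg fun i hi => hW i (mem_range.1 (mem_of_mem_erase hi)))

lemma sum_lt_of_not_isGoodIndex_succ (hmono : ∀ j < k, W j ≤ W k)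
    (hgood : IsGoodIndex W k) (hnext : ¬ IsGoodIndex W (k + 1)) :
    ∑ i ∈ range k, W i < ((k : ℝ) - 2) * W k := by
  simp only [IsGoodIndex, not_forall, not_le, exists_prop, mem_range] at hnext
  obtain ⟨j, hj, hlt⟩ := hnext
  push_cast at hlt
  rcases (Nat.lt_succ_iff.1 hj).lt_or_eq with hjk | rfl
  · have := hgood j (mem_range.2 hjk)
    rw [range_add_one, erase_insert_of_ne (by omega), sum_insert (by simp)] at hlt
    linarith [hmono j hjk]
  · rw [range_add_one, erase_insert (by simp)] at hlt
    linarith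

lemma roundingProb_of_lt {i : ℕ} (hi : i < k) :
    roundingProb W k i = ((∑ j ∈ range k, W j) / W i - ((k : ℝ) - 2)) / roundingDenom W k :=
  if_pos hi

lemma roundingProb_of_le {i : ℕ} (hi : k ≤ i) : roundingProb W k i = 0 :=
  if_neg hi.not_gt

lemma sq_le_sum_mul_sum_inv (hW : ∀ i < k, 0 < W i) :
    (k : ℝ) ^ 2 ≤ (∑ j ∈ range k, W j) * ∑ j ∈ range k, (W j)⁻¹ := by
  have := sum_sq_le_sum_mul_sum_of_sq_le_mul (range k) (r := fun _ => (1 : ℝ))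
    (fun i hi => (hW i (mem_range.1 hi)).le)
    (fun i hi => (inv_pos.2 (hW i (mem_range.1 hi))).le)
    (fun i hi => by rw [one_pow, mul_inv_cancel₀ (hW i (mem_range.1 hi)).ne'])
  simpa using this

lemma two_mul_le_roundingDenom (hW : ∀ i < k, 0 < W i) : 2 * (k : ℝ) ≤ roundingDenom W k := by
  have := sq_le_sum_mul_sum_inv hW
  unfold roundingDenom
  nlinarith

lemma roundingDenom_pos (hk : 0 < k) (hW : ∀ i < k, 0 < W i) : 0 < roundingDenom W k := by
  have : (0 : ℝ) < k := by exact_mod_cast hk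
  linarith [two_mul_le_roundingDenom hW]

lemma roundingProb_mul_self {i : ℕ} (hi : i < k) (hWi : 0 < W i) :
    roundingProb W k i * W i
      = ((∑ j ∈ range k, W j) - ((k : ℝ) - 2) * W i) / roundingDenom W k := by
  rw [roundingProb_of_lt hi]
  field_simp

lemma roundingProb_nonneg (hW : ∀ i < k, 0 < W i) (hgood : IsGoodIndex W k) (i : ℕ) :
    0 ≤ roundingProb W k i := by
  rcases lt_or_ge i k with hi | hi
  · rw [roundingProb_of_lt hi]
    refine div_nonneg (sub_nonneg.2 ?_) (roundingDenom_pos (by omega) hW).le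
    rw [le_div_iff₀ (hW i hi)]
    exact hgood.sub_two_mul_le_sum hi
  · rw [roundingProb_of_le hi]

lemma sum_roundingProb (hk : 0 < k) (hW : ∀ i < k, 0 < W i) :
    ∑ i ∈ range k, roundingProb W k i = 1 := by
  have hden := roundingDenom_pos hk hW
  rw [sum_congr rfl fun i hi => roundingProb_of_lt (mem_range.1 hi), ← sum_div,
    div_eq_one_iff_eq hden.ne', sum_sub_distrib]
  simp_rw [roundingDenom, div_eq_mul_inv, ← mul_sum, sum_const, card_range, nsmul_eq_mul]

lemma sum_roundingProb_mul_add (hk : 0 < k) (hW : ∀ i < k, 0 < W i) (c : ℝ) :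
    ∑ i ∈ range k, roundingProb W k i * (c + W i)
      = c + 2 * (∑ j ∈ range k, W j) / roundingDenom W k := by
  simp only [mul_add, sum_add_distrib, ← sum_mul, sum_roundingProb hk hW, one_mul]
  rw [sum_congr rfl fun i hi => roundingProb_mul_self (mem_range.1 hi) (hW i (mem_range.1 hi)),
    ← sum_div, sum_sub_distrib, ← mul_sum, sum_const, card_range, nsmul_eq_mul]
  ring

lemma sum_range_roundingProb_mul {n : ℕ} (hkn : k ≤ n) (d : ℕ → ℝ) :
    ∑ i ∈ range n, roundingProb W k i * d i = ∑ i ∈ range k, roundingProb W k i * d i :=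
  (sum_subset (range_subset_range.2 hkn) fun i _ hi => by
    rw [roundingProb_of_le (by simpa using hi), zero_mul]).symm

theorem sum_roundingProb_mul_le (d : ℕ → ℝ) {n j₀ : ℕ}
    (hW : ∀ i < n, 0 < W i) (hsorted : ∀ i j, i ≤ j → j < n → W i ≤ W j)
    (hk : 2 ≤ k) (hkn : k ≤ n) (hgood : IsGoodIndex W k)
    (hnext : k < n → ¬ IsGoodIndex W (k + 1))
    (hj₀ : j₀ < n) (hd : ∀ i < n, i ≠ j₀ → d i ≤ d j₀ + W j₀ + W i) :
    ∑ i ∈ range n, roundingProb W k i * d i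
      ≤ d j₀ + W j₀ * (1 + 2 * ((k : ℝ) - 2) / roundingDenom W k) := by
  have hWk : ∀ i < k, 0 < W i := fun i hi => hW i (hi.trans_le hkn)
  have hden := roundingDenom_pos (by omega) hWk
  have hq := roundingProb_nonneg hWk hgood
  rw [sum_range_roundingProb_mul hkn]
  set q := roundingProb W k
  set c := d j₀ + W j₀
  rcases lt_or_ge j₀ k with hj₀k | hkj₀
  · have hj := mem_range.2 hj₀k
    calc ∑ i ∈ range k, q i * d i
        = q j₀ * d j₀ + ∑ i ∈ (range k).erase j₀, q i * d i := (add_sum_erase _ _ hj).symm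
      _ ≤ q j₀ * (c + W j₀) - 2 * (q j₀ * W j₀)
            + ∑ i ∈ (range k).erase j₀, q i * (c + W i) := by
          refine add_le_add (le_of_eq (by ring)) (sum_le_sum fun i hi => ?_)
          have hik := mem_range.1 (mem_of_mem_erase hi)
          exact mul_le_mul_of_nonneg_left (hd i (by omega) (ne_of_mem_erase hi)) (hq i)
      _ = ∑ i ∈ range k, q i * (c + W i) - 2 * (q j₀ * W j₀) := by
          rw [← add_sum_erase _ _ hj]; ring
      _ = d j₀ + W j₀ * (1 + 2 * ((k : ℝ) - 2) / roundingDenom W k) := by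
          rw [sum_roundingProb_mul_add (by omega) hWk, roundingProb_mul_self hj₀k (hWk _ hj₀k)]
          field_simp
          ring
  · have hD : ∑ i ∈ range k, W i ≤ ((k : ℝ) - 2) * W j₀ := by
      have hk2 : (0 : ℝ) ≤ (k : ℝ) - 2 := sub_nonneg.2 (by exact_mod_cast hk)
      refine (sum_lt_of_not_isGoodIndex_succ (fun j hj => hsorted j k hj.le (by omega)) hgood
        (hnext (by omega))).le.trans ?_
      exact mul_le_mul_of_nonneg_left (hsorted k j₀ hkj₀ hj₀) hk2
    calc ∑ i ∈ range k, q i * d i ≤ ∑ i ∈ range k, q i * (c + W i) :=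
          sum_le_sum fun i hi => by
            have hik := mem_range.1 hi
            exact mul_le_mul_of_nonneg_left (hd i (by omega) (by omega)) (hq i)
      _ = c + 2 * (∑ i ∈ range k, W i) / roundingDenom W k :=
          sum_roundingProb_mul_add (by omega) hWk c
      _ ≤ d j₀ + W j₀ * (1 + 2 * ((k : ℝ) - 2) / roundingDenom W k) := by
          rw [mul_add, mul_one, ← add_assoc, mul_div_assoc', mul_left_comm]
          gcongr
          linarith

lemma two_mul_sub_two_div_roundingDenom_le {n : ℕ} (hW : ∀ i < k, 0 < W i)
    (hk : 2 ≤ k) (hkn : k ≤ n) : 2 * ((k : ℝ) - 2) / roundingDenom W k ≤ 1 - 2 / n := by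
  have hk' : (2 : ℝ) ≤ k := by exact_mod_cast hk
  have hkn' : (k : ℝ) ≤ n := by exact_mod_cast hkn
  calc 2 * ((k : ℝ) - 2) / roundingDenom W k ≤ 2 * ((k : ℝ) - 2) / (2 * k) := by
        gcongr
        exact two_mul_le_roundingDenom hW
    _ = 1 - 2 / k := by field_simp
    _ ≤ 1 - 2 / n := by gcongr

theorem sum_roundingProb_mul_le_three_sub_two_div (d : ℕ → ℝ) {n j₀ : ℕ}
    (hW : ∀ i < n, 0 < W i) (hsorted : ∀ i j, i ≤ j → j < n → W i ≤ W j)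
    (hk : 2 ≤ k) (hkn : k ≤ n) (hgood : IsGoodIndex W k)
    (hnext : k < n → ¬ IsGoodIndex W (k + 1))
    (hj₀ : j₀ < n) (hWd : W j₀ ≤ d j₀)
    (hd : ∀ i < n, i ≠ j₀ → d i ≤ d j₀ + W j₀ + W i) :
    ∑ i ∈ range n, roundingProb W k i * d i ≤ (3 - 2 / n) * d j₀ := by
  have hWk : ∀ i < k, 0 < W i := fun i hi => hW i (hi.trans_le hkn)
  have hk' : (2 : ℝ) ≤ k := by exact_mod_cast hk
  have hfactor_nonneg : 0 ≤ 2 * ((k : ℝ) - 2) / roundingDenom W k :=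
    div_nonneg (by linarith) (roundingDenom_pos (by omega) hWk).le
  have hfactor_le := two_mul_sub_two_div_roundingDenom_le hWk hk hkn
  calc ∑ i ∈ range n, roundingProb W k i * d i
      ≤ d j₀ + W j₀ * (1 + 2 * ((k : ℝ) - 2) / roundingDenom W k) :=
        sum_roundingProb_mul_le d hW hsorted hk hkn hgood hnext hj₀ hd
    _ ≤ d j₀ + d j₀ * (2 - 2 / n) := by
        gcongr
        · linarith [hW j₀ hj₀]
        · linarith
    _ = (3 - 2 / n) * d j₀ := by ring

end Rounding

/-- **Exact-semi-distance core of Theorem 1.2.**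
Let `P, H 0, …, H (n−1)` (with `n ≥ 2`) be probability distributions on a countable
set `X`.  With Scheffé sets `S i j` (`{x | H i x < H j x}` for `i < j` and
`{x | H i x ≤ H j x}` for `i > j`), semi-distances
`w i j = |H j (S i j) − P (S i j)|` (and `w i i = 0`), and max semi-distances
`Wm j = max_{i<n} w i j` assumed positive and sorted nondecreasingly, let `q` be the
probability vector produced by the rounding procedure applied to `Wm`.  Then
`Σ_i q i · d_TV(P, H i) ≤ (3 − 2/n) · min_j d_TV(P, H j)`. -/
theorem expected_value_three_minus_two_over_n {X : Type*}
    (n : ℕ) (hn : 2 ≤ n)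
    (P : X → ℝ) (H : ℕ → X → ℝ)
    (hPs : Summable P) (hP1 : ∑' x, P x = 1)
    (hHs : ∀ i, i < n → Summable (H i))
    (hH1 : ∀ i, i < n → ∑' x, H i x = 1)
    (S : ℕ → ℕ → Set X)
    (hS : ∀ i j, S i j = if i < j then {x | H i x < H j x} else {x | H i x ≤ H j x})
    (w : ℕ → ℕ → ℝ)
    (hw : ∀ i j, i ≠ j → w i j = |(∑' x : S i j, H j x) - (∑' x : S i j, P x)|)
    (hwdiag : ∀ i, w i i = 0)
    (Wm : ℕ → ℝ)
    (hWmub : ∀ j, j < n → ∀ i, i < n → w i j ≤ Wm j)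
    (hWmmem : ∀ j, j < n → ∃ i, i < n ∧ Wm j = w i j)
    (hWpos : ∀ j, j < n → 0 < Wm j)
    (hsorted : ∀ i j, i ≤ j → j < n → Wm i ≤ Wm j)
    (k : ℕ) (hkn : k ≤ n)
    (hgood : IsGoodIndex Wm k)
    (hmax : ∀ k', k' ≤ n → IsGoodIndex Wm k' → k' ≤ k)
    (q : ℕ → ℝ)
    (hq : ∀ i, q i = if i < k then
        ((∑ j ∈ Finset.range k, Wm j) / Wm i - ((k : ℝ) - 2)) /
          ((∑ j ∈ Finset.range k, Wm j) * (∑ j ∈ Finset.range k, (Wm j)⁻¹)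
            - (k : ℝ) * ((k : ℝ) - 2))
      else 0) :
    ∑ i ∈ Finset.range n, q i * ((1 / 2) * ∑' x, |P x - H i x|)
      ≤ (3 - 2 / (n : ℝ)) *
        (Finset.range n).inf' (Finset.nonempty_range_iff.mpr (by omega))
          (fun j => (1 / 2) * ∑' x, |P x - H j x|) := by
  have hmass : ∀ i < n, ∑' x, P x = ∑' x, H i x := fun i hi => hP1.trans (hH1 i hi).symm
  have hWle : ∀ j < n, Wm j ≤ tvDist P (H j) := by
    intro j hj
    obtain ⟨i, hi, hWi⟩ := hWmmem j hj
    have hij : i ≠ j := by rintro rfl; rw [hwdiag] at hWi; exact (hWpos i hj).ne' hWi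
    rw [hWi, hw i j hij]
    exact abs_tsum_subtype_sub_le_tvDist hPs (hHs j hj) (hmass j hj) _
  have hscheffe : ∀ i j, i < n → j < n → i ≠ j →
      tvDist P (H j) ≤ tvDist P (H i) + Wm i + Wm j := by
    intro i j hi hj hij
    have := tvDist_le_add_abs_add_abs hPs (hHs i hi) (hHs j hj) (hmass i hi)
      ((hmass i hi).symm.trans (hmass j hj)) (setOf_lt_subset_scheffeSet hS i j)
      (scheffeSet_subset_setOf_le hS i j)
    rw [← hw i j hij, ← scheffeSet_swap hS hij, ← hw j i hij.symm] at this
    linarith [hWmub j hj i hi, hWmub i hi j hj]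
  obtain ⟨j₀, hj₀, hmin⟩ := exists_min_image (range n) (fun j => tvDist P (H j))
    (nonempty_range_iff.2 (by omega))
  have hk2 : 2 ≤ k :=
    hmax 2 hn (isGoodIndex_of_le_three (fun i hi => (hWpos i (by omega)).le) (by norm_num))
  have hnext : k < n → ¬ IsGoodIndex Wm (k + 1) := fun hlt hgood' => by
    have := hmax (k + 1) hlt hgood'
    omega
  rw [show q = roundingProb Wm k from funext hq]
  calc _ ≤ (3 - 2 / (n : ℝ)) * tvDist P (H j₀) :=
        sum_roundingProb_mul_le_three_sub_two_div _ hWpos hsorted hk2 hkn hgood hnext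
          (mem_range.1 hj₀) (hWle j₀ (mem_range.1 hj₀)) fun i hi hij =>
            hscheffe j₀ i (mem_range.1 hj₀) hi (Ne.symm hij)
    _ ≤ _ := by
        refine mul_le_mul_of_nonneg_left (le_inf' _ _ fun j hj => hmin j hj) ?_
        have hn' : (2 : ℝ) ≤ n := by exact_mod_cast hn
        have : 2 / (n : ℝ) ≤ 1 := by rw [div_le_one (by linarith)]; exact hn'
        linarith
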